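/- arXiv:1505.02091 — 3 statements merged into one kernel-verified Lean document; each statement's English description precedes it below -/
import Mathlib

section
/- Closed choice on the natural numbers C_N is Weihrauch equivalent to unique closed choice UC_N, the restriction of C_N to singleton closed subsets of N. -/
/- Common background: type-two computability on Baire space, represented spaces
(representations as functional relations), Weihrauch reducibility, Cantor space,
Martin-Löf tests, Martin-Löf randomness, and the basic multivalued functions
`C_ℕ`, `d_MLR`, `LAY`, the layer map and layerwise computability. -/

namespace WL

abbrev Baire : Type := ℕ → ℕ
abbrev Cantor : Type := ℕ → Bool

/-- The initial segment of length `m` of a point of Baire space. -/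
def initSeg (p : Baire) (m : ℕ) : List ℕ := (List.range m).map p

/-- `l` is a prefix of the sequence `p`. -/
def PrefixOfFun (l : List ℕ) (p : Baire) : Prop := ∀ i : Fin l.length, l.get i = p i

/-- `F` is a computable (partial) function on Baire space, with domain (at least) `D`:
there is a computable monotone word function producing, on longer and longer prefixes of
an input `p ∈ D`, longer and longer prefixes of `F p`. -/
def ComputableOn (F : Baire → Baire) (D : Set Baire) : Prop :=
  ∃ φ : List ℕ → List ℕ, Computable φ ∧ (∀ l l' : List ℕ, l <+: l' → φ l <+: φ l') ∧
    ∀ p ∈ D, (∀ m, PrefixOfFun (φ (initSeg p m)) (F p)) ∧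
      ∀ n, ∃ m, n ≤ (φ (initSeg p m)).length

/-- Pairing on Baire space. -/
def pairB (p q : Baire) : Baire := fun n => if n % 2 = 0 then p (n / 2) else q (n / 2)

def evens (p : Baire) : Baire := fun n => p (2 * n)

def odds (p : Baire) : Baire := fun n => p (2 * n + 1)

/-- `F` is a realizer of the multivalued function `f`, w.r.t. representations
`δX`, `δY` (given as functional relations between names and points). -/
def Realizes {X Y : Type} (δX : Baire → X → Prop) (δY : Baire → Y → Prop)
    (f : X → Set Y) (F : Baire → Baire) : Prop :=
  ∀ p x, δX p x → (f x).Nonempty → ∃ y, δY (F p) y ∧ y ∈ f x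

/-- The names of points in the domain of the multivalued function `f`. -/
def domNames {X Y : Type} (δX : Baire → X → Prop) (f : X → Set Y) : Set Baire :=
  {p | ∃ x, δX p x ∧ (f x).Nonempty}

/-- Weihrauch reducibility `f ≤_W g`. -/
def WRed {X Y Z W : Type} (δX : Baire → X → Prop) (δY : Baire → Y → Prop)
    (δZ : Baire → Z → Prop) (δW : Baire → W → Prop)
    (f : X → Set Y) (g : Z → Set W) : Prop :=
  ∃ H K : Baire → Baire, ComputableOn H (domNames δX f) ∧
    ∀ G : Baire → Baire, Realizes δZ δW g G →
      ComputableOn K {r | ∃ p ∈ domNames δX f, r = pairB p (G (H p))} ∧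
      Realizes δX δY f fun p => K (pairB p (G (H p)))

/-- Weihrauch equivalence. -/
def WEquiv {X Y Z W : Type} (δX : Baire → X → Prop) (δY : Baire → Y → Prop)
    (δZ : Baire → Z → Prop) (δW : Baire → W → Prop)
    (f : X → Set Y) (g : Z → Set W) : Prop :=
  WRed δX δY δZ δW f g ∧ WRed δZ δW δX δY g f

/-- The multivalued function `f` is computable. -/
def ComputableMF {X Y : Type} (δX : Baire → X → Prop) (δY : Baire → Y → Prop)
    (f : X → Set Y) : Prop :=
  ∃ F : Baire → Baire, ComputableOn F (domNames δX f) ∧ Realizes δX δY f F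

/-- Representation of `ℕ`. -/
def repNat : Baire → ℕ → Prop := fun p n => p 0 = n

/-- Representation of Baire space. -/
def repBaire : Baire → Baire → Prop := fun p q => p = q

/-- Representation of Cantor space. -/
def repCantor : Baire → Cantor → Prop := fun p x => ∀ n, p n = if x n then 1 else 0

/-- Representation of closed subsets of `ℕ` by enumerations of their complements. -/
def repClosedNat : Baire → Set ℕ → Prop := fun p A => ∀ n, n ∈ A ↔ ¬ ∃ i, p i = n + 1

/-- Representation of open subsets of `ℕ` by enumerations. -/
def repOpenNat : Baire → Set ℕ → Prop := fun p A => ∀ n, n ∈ A ↔ ∃ i, p i = n + 1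

/-- Product representation. -/
def prodRep {X Z : Type} (δX : Baire → X → Prop) (δZ : Baire → Z → Prop) :
    Baire → X × Z → Prop := fun p xz => δX (evens p) xz.1 ∧ δZ (odds p) xz.2

/-- Representation of countable powers. -/
def seqRep {X : Type} (δX : Baire → X → Prop) : Baire → (ℕ → X) → Prop :=
  fun p xs => ∀ i, δX (fun n => p (Nat.pair i n)) (xs i)

/-- Product of multivalued functions. -/
def prodMF {X Y Z W : Type} (f : X → Set Y) (g : Z → Set W) : X × Z → Set (Y × W) :=
  fun xz => f xz.1 ×ˢ g xz.2

/-- Composition of multivalued functions (with the usual domain condition). -/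
def compMF {X Y Z : Type} (g : Y → Set Z) (f : X → Set Y) : X → Set Z :=
  fun x => {z | (∀ y ∈ f x, (g y).Nonempty) ∧ ∃ y ∈ f x, z ∈ g y}

/-- The cylinder of a finite binary word. -/
def cyl (w : List Bool) : Set Cantor := {x | ∀ i : Fin w.length, x i = w.get i}

/-- Decoding a natural number as a finite binary word. -/
def wordOf (k : ℕ) : List Bool := (Encodable.decode (α := List Bool) k).getD []

/-- The open subset of Cantor space enumerated by `p` (as a union of cylinders). -/
def openOf (p : Baire) : Set Cantor :=
  ⋃ i, if p i = 0 then (∅ : Set Cantor) else cyl (wordOf (p i - 1))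

/-- Representation of open subsets of Cantor space. -/
def repOpenCantor : Baire → Set Cantor → Prop := fun p U => U = openOf p

/-- Representation of closed subsets of Cantor space. -/
def repClosedCantor : Baire → Set Cantor → Prop := fun p A => A = (openOf p)ᶜ

/-- The number of binary words of length `n` whose cylinder is contained in `U`. -/
noncomputable def cylCount (U : Set Cantor) (n : ℕ) : ℕ :=
  Nat.card {w : Fin n → Bool // cyl (List.ofFn w) ⊆ U}

/-- For an open set `U`, `lebLe U i` expresses `λ(U) ≤ 2^{-i}` for the uniform measure. -/
def lebLe (U : Set Cantor) (i : ℕ) : Prop := ∀ n, 2 ^ i * cylCount U n ≤ 2 ^ n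

/-- A Martin-Löf test: a computable sequence of (codes of) open sets `U_i` with
`λ(U_i) ≤ 2^{-i}`. -/
structure MLTest where
  e : ℕ → ℕ → ℕ
  comp : Computable₂ e
  meas : ∀ i, lebLe (openOf (e i)) i

/-- The `i`-th level of a Martin-Löf test. -/
def MLTest.U (T : MLTest) (i : ℕ) : Set Cantor := openOf (T.e i)

/-- Martin-Löf randomness. -/
def MLRandom (x : Cantor) : Prop := ∀ T : MLTest, ∃ i, x ∉ T.U i

/-- A universal Martin-Löf test. -/
def MLTest.Universal (T : MLTest) : Prop := ∀ T' : MLTest, (⋂ i, T'.U i) ⊆ ⋂ i, T.U i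

/-- Closed choice on the naturals, as a multivalued function on `A(ℕ)`. -/
def CN : Set ℕ → Set ℕ := fun A => A

/-- `d_MLR : MLR → {1}`. -/
def dMLR : Cantor → Set ℕ := fun x => {n | MLRandom x ∧ n = 1}

/-- The degree `LAY = C_ℕ × d_MLR`. -/
def LAY : Set ℕ × Cantor → Set (ℕ × ℕ) := prodMF CN dMLR

abbrev repLAYin : Baire → Set ℕ × Cantor → Prop := prodRep repClosedNat repCantor
abbrev repPairNat : Baire → ℕ × ℕ → Prop := prodRep repNat repNat

/-- The layer map of a Martin-Löf test: `n ∈ Lay T x` iff `x ∉ U_n`. -/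
def Lay (T : MLTest) : Cantor → Set ℕ := fun x => {n | MLRandom x ∧ x ∉ T.U n}

/-- The randomness deficiency map: `RD T x = min {n | x ∉ U_n}`. -/
def RD (T : MLTest) : Cantor → Set ℕ := fun x => {n | MLRandom x ∧ IsLeast {m | x ∉ T.U m} n}

/-- `f : MLR ⇉ X` is layerwise computable w.r.t. the test `T`: some computable
`g(p, k)` produces a value in `f p` whenever `p ∉ U_k`. -/
def LayerwiseComputable (T : MLTest) {X : Type} (δX : Baire → X → Prop)
    (f : Cantor → Set X) : Prop :=
  ∃ G : Baire → Baire,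
    ComputableOn G {r | ∃ p x k, repCantor p x ∧ x ∉ T.U k ∧ (f x).Nonempty ∧
      r = pairB p fun _ => k} ∧
    ∀ p x k, repCantor p x → x ∉ T.U k → (f x).Nonempty →
      ∃ y, δX (G (pairB p fun _ => k)) y ∧ y ∈ f x

/-- Layerwise computability for multivalued functions with an additional input. -/
def LayerwiseComputable₂ (T : MLTest) {I X : Type} (δI : Baire → I → Prop)
    (δX : Baire → X → Prop) (f : Cantor × I → Set X) : Prop :=
  ∃ G : Baire → Baire,
    ComputableOn G {r | ∃ p q x i k, repCantor p x ∧ δI q i ∧ x ∉ T.U k ∧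
      (f (x, i)).Nonempty ∧ r = pairB (pairB p q) fun _ => k} ∧
    ∀ p q x i k, repCantor p x → δI q i → x ∉ T.U k → (f (x, i)).Nonempty →
      ∃ y, δX (G (pairB (pairB p q) fun _ => k)) y ∧ y ∈ f (x, i)

/-- `Σ_{i<|w|} (2 w(i) - 1)`: the signed count of a binary word. -/
def signedSum (w : List Bool) : ℤ := (w.count true : ℤ) - (w.count false : ℤ)

/-- The prefix of length `n` of a point of Cantor space. -/
def initBits (x : Cantor) (n : ℕ) : List Bool := List.ofFn fun i : Fin n => x i

/-- Unique closed choice: the restriction of `C_ℕ` to singletons. -/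
def UCN : Set ℕ → Set ℕ := fun A => {n | A = {n}}

/-!
From an enumeration of the complement of a nonempty closed `A ⊆ ℕ`, let `s₀` be the first stage by
which every number below `min A` has been enumerated. Then `⟨min A, s₀⟩` is the only pair `⟨a, s⟩`
with `a ∈ A` such that every `b < a` is enumerated within the first `s` steps but not within fewer.
Each way of failing this is witnessed at a finite stage, so a name of the singleton
`{⟨min A, s₀⟩}` is computable from the name of `A`, and `UC_ℕ` applied to it yields `min A` after
projecting. Conversely `UC_ℕ` is a restriction of `C_ℕ`.
-/

@[simp] lemma length_initSeg (p : Baire) (m : ℕ) : (initSeg p m).length = m := by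
  simp [initSeg]

lemma mem_initSeg {p : Baire} {x m : ℕ} : x ∈ initSeg p m ↔ ∃ i < m, p i = x := by
  simp [initSeg]

lemma getD_initSeg {p : Baire} {i m : ℕ} (h : i < m) : (initSeg p m).getD i 0 = p i := by
  simp [initSeg, List.getElem?_range h]

lemma take_initSeg (p : Baire) {t m : ℕ} (h : t ≤ m) : (initSeg p m).take t = initSeg p t := by
  rw [initSeg, initSeg, ← List.map_take, List.take_range, Nat.min_eq_left h]

lemma initSeg_prefix (p : Baire) {m m' : ℕ} (h : m ≤ m') : initSeg p m <+: initSeg p m' :=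
  take_initSeg p h ▸ List.take_prefix _ _

lemma prefixOfFun_initSeg (p : Baire) (m : ℕ) : PrefixOfFun (initSeg p m) p := by
  intro i
  rw [List.get_eq_getElem]
  simp [initSeg]

lemma _root_.List.range_prefix_range {a b : ℕ} (h : a ≤ b) : List.range a <+: List.range b := by
  simpa [Nat.min_eq_left h] using (List.range b).take_prefix a

lemma _root_.List.IsPrefix.take_eq {α : Type*} {l l' : List α} (h : l <+: l') {t : ℕ} (ht : t ≤ l.length) :
    l.take t = l'.take t := by
  obtain ⟨u, rfl⟩ := h
  exact (List.take_append_of_le_length ht).symm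

lemma computableOn_id (D : Set Baire) : ComputableOn id D :=
  ⟨id, Computable.id, fun _ _ h => h,
    fun p _ => ⟨prefixOfFun_initSeg p, fun n => ⟨n, by simp⟩⟩⟩

lemma computableOn_of_lookahead (d : ℕ) {g : List ℕ → ℕ → ℕ} (hg : Primrec₂ g)
    (hg_prefix : ∀ {l l' : List ℕ} {i : ℕ}, l <+: l' → i + d < l.length → g l i = g l' i)
    (D : Set Baire) : ComputableOn (fun p i => g (initSeg p (i + d + 1)) i) D := by
  refine ⟨fun l => (List.range (l.length - d)).map (g l),
    (Primrec.list_map (Primrec.list_range.comp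
      (Primrec.nat_sub.comp Primrec.list_length (Primrec.const d))) hg).to_comp, ?_, ?_⟩
  · intro l l' h
    have hcongr : (List.range (l.length - d)).map (g l) = (List.range (l.length - d)).map (g l') :=
      List.map_congr_left fun i hi => hg_prefix h (by have := List.mem_range.1 hi; omega)
    show (List.range (l.length - d)).map (g l) <+: (List.range (l'.length - d)).map (g l')
    rw [hcongr]
    exact (List.range_prefix_range (by have := h.length_le; omega)).map _
  · intro p _
    refine ⟨fun m i => ?_, fun n => ⟨n + d, by simp⟩⟩
    have hi : (i : ℕ) < m - d := by simpa using i.isLt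
    simp only [List.get_eq_getElem, List.getElem_map, List.getElem_range]
    exact (hg_prefix (initSeg_prefix p (by omega : i + d + 1 ≤ m)) (by simp)).symm

lemma computableOn_apply_one {e : ℕ → ℕ} (he : Primrec e) (D : Set Baire) :
    ComputableOn (fun r _ => e (r 1)) D := by
  convert computableOn_of_lookahead 1 (g := fun l _ => e (l.getD 1 0))
    (he.comp ((Primrec.list_getD 0).comp Primrec.fst (Primrec.const 1))).to₂
    (fun ⟨_, h⟩ hi => by rw [← h, List.getD_append _ _ _ _ (by omega)]) D using 1
  funext r i
  rw [getD_initSeg (by omega)]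

lemma wRed_of_computableOn_of_primrec {X Z : Type} {δX : Baire → X → Prop}
    {δZ : Baire → Z → Prop} {f : X → Set ℕ} {g : Z → Set ℕ} {H : Baire → Baire}
    (hH : ComputableOn H (domNames δX f)) {e : ℕ → ℕ} (he : Primrec e)
    (hred : ∀ p x, δX p x → (f x).Nonempty →
      ∃ z, δZ (H p) z ∧ (g z).Nonempty ∧ ∀ y ∈ g z, e y ∈ f x) :
    WRed δX repNat δZ repNat f g := by
  refine ⟨H, fun r _ => e (r 1), hH, fun G hG => ⟨computableOn_apply_one he _, ?_⟩⟩
  intro p x hpx hfx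
  obtain ⟨z, hz, hgz, hef⟩ := hred p x hpx hfx
  obtain ⟨y, hy, hyg⟩ := hG (H p) z hz hgz
  exact ⟨e y, congrArg e hy, hef y hyg⟩

/-- The finite enumeration `L` of a complement has removed every number below `a`. -/
def ExcludesBelow (L : List ℕ) (a : ℕ) : Prop := ∀ b < a, b + 1 ∈ L

instance : DecidableRel ExcludesBelow := fun L a =>
  inferInstanceAs (Decidable (∀ b < a, b + 1 ∈ L))

/-- After seeing the prefix `L`, the pair `⟨a, s⟩` is known not to be `⟨min A, s₀⟩`, where `s₀` is
the first stage by which every number below `min A` has been removed. -/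
def Rejects (L : List ℕ) (a s : ℕ) : Prop :=
  a + 1 ∈ L ∨ ¬ ExcludesBelow (L.take s) a ∨ ∃ s' < s, ExcludesBelow (L.take s') a

instance (L : List ℕ) (a s : ℕ) : Decidable (Rejects L a s) := by
  unfold Rejects; infer_instance

/-- Entry `⟨⟨a, s⟩, t⟩` of the enumeration reports `⟨a, s⟩` if stage `t` rejects it. -/
def minPairStep (l : List ℕ) (i : ℕ) : ℕ :=
  if i.unpair.1.unpair.2 ≤ i.unpair.2 ∧
      Rejects (l.take i.unpair.2) i.unpair.1.unpair.1 i.unpair.1.unpair.2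
  then i.unpair.1 + 1 else 0

def minPairName (p : Baire) : Baire := fun i => minPairStep (initSeg p (i + 1)) i

lemma primrecRel_excludesBelow : PrimrecRel ExcludesBelow := by
  have hmem : PrimrecRel fun (b : ℕ) (L : List ℕ) => b + 1 ∈ L :=
    ((PrimrecRel.exists_mem_list Primrec.eq).comp Primrec.snd
      (Primrec.succ.comp Primrec.fst)).of_eq fun _ => by simp
  exact ((PrimrecRel.forall_mem_list hmem).comp (Primrec.list_range.comp Primrec.snd)
    Primrec.fst).of_eq fun _ => by simp [ExcludesBelow]

lemma primrecPred_rejects :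
    PrimrecPred fun q : List ℕ × ℕ × ℕ => Rejects q.1 q.2.1 q.2.2 := by
  open Primrec in
  have hmem : PrimrecPred fun q : List ℕ × ℕ × ℕ => q.2.1 + 1 ∈ q.1 :=
    ((PrimrecRel.exists_mem_list Primrec.eq).comp fst (succ.comp (fst.comp snd))).of_eq
      fun _ => by simp
  have hexcl : PrimrecPred fun q : List ℕ × ℕ × ℕ => ExcludesBelow (q.1.take q.2.2) q.2.1 :=
    primrecRel_excludesBelow.comp (list_take.comp (snd.comp snd) fst) (fst.comp snd)
  have hexclAt : PrimrecRel fun (s' : ℕ) (y : List ℕ × ℕ) => ExcludesBelow (y.1.take s') y.2 :=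
    primrecRel_excludesBelow.comp (list_take.comp fst (fst.comp snd)) (snd.comp snd)
  have hearlier : PrimrecPred fun q : List ℕ × ℕ × ℕ =>
      ∃ s' < q.2.2, ExcludesBelow (q.1.take s') q.2.1 :=
    ((PrimrecRel.exists_mem_list hexclAt).comp (list_range.comp (snd.comp snd))
      (pair fst (fst.comp snd))).of_eq fun _ => by simp
  exact hmem.or (hexcl.not.or hearlier)

lemma primrec₂_minPairStep : Primrec₂ minPairStep := by
  open Primrec in
  have n : Primrec fun q : List ℕ × ℕ => q.2.unpair.1 := fst.comp (unpair.comp snd)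
  have t : Primrec fun q : List ℕ × ℕ => q.2.unpair.2 := snd.comp (unpair.comp snd)
  have a : Primrec fun q : List ℕ × ℕ => q.2.unpair.1.unpair.1 := fst.comp (unpair.comp n)
  have s : Primrec fun q : List ℕ × ℕ => q.2.unpair.1.unpair.2 := snd.comp (unpair.comp n)
  exact Primrec.ite ((nat_le.comp s t).and
    (primrecPred_rejects.comp (pair (list_take.comp t fst) (pair a s)))) (succ.comp n) (const 0)

lemma computableOn_minPairName (D : Set Baire) : ComputableOn minPairName D := by
  refine computableOn_of_lookahead 0 primrec₂_minPairStep (fun {l l' i} h hi => ?_) D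
  have ht : i.unpair.2 ≤ l.length := (Nat.unpair_right_le i).trans hi.le
  simp only [minPairStep, h.take_eq ht]

lemma exists_minPairName_eq_iff (p : Baire) (a s : ℕ) :
    (∃ i, minPairName p i = Nat.pair a s + 1) ↔ ∃ t, s ≤ t ∧ Rejects (initSeg p t) a s := by
  have happly (i : ℕ) : minPairName p i =
      if i.unpair.1.unpair.2 ≤ i.unpair.2 ∧
        Rejects (initSeg p i.unpair.2) i.unpair.1.unpair.1 i.unpair.1.unpair.2
      then i.unpair.1 + 1 else 0 := by
    rw [minPairName, minPairStep, take_initSeg p (i.unpair_right_le.trans i.le_succ)]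
  constructor
  · rintro ⟨i, hi⟩
    rw [happly] at hi
    split_ifs at hi with hrej
    · rw [show i.unpair.1 = Nat.pair a s by omega, Nat.unpair_pair] at hrej
      exact ⟨_, hrej⟩
  · rintro ⟨t, hst, hrej⟩
    refine ⟨Nat.pair (Nat.pair a s) t, ?_⟩
    simp [happly, hst, hrej]

lemma exists_rejects_initSeg_iff (p : Baire) (a s : ℕ) :
    (∃ t, s ≤ t ∧ Rejects (initSeg p t) a s) ↔
      (∃ j, p j = a + 1) ∨ ¬ ExcludesBelow (initSeg p s) a ∨
        ∃ s' < s, ExcludesBelow (initSeg p s') a := by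
  have hrej {t} (hst : s ≤ t) : Rejects (initSeg p t) a s ↔ a + 1 ∈ initSeg p t ∨
      ¬ ExcludesBelow (initSeg p s) a ∨ ∃ s' < s, ExcludesBelow (initSeg p s') a := by
    rw [Rejects, take_initSeg p hst]
    refine or_congr_right (or_congr_right (exists_congr fun s' => and_congr_right fun hs' => ?_))
    rw [take_initSeg p (by omega)]
  constructor
  · rintro ⟨t, hst, h⟩
    rw [hrej hst, mem_initSeg] at h
    exact h.imp_left fun ⟨j, _, hj⟩ => ⟨j, hj⟩
  · rintro (⟨j, hj⟩ | h)
    · exact ⟨max s (j + 1), le_max_left _ _,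
        (hrej (le_max_left _ _)).2 (Or.inl (mem_initSeg.2 ⟨j, by omega, hj⟩))⟩
    · exact ⟨s, le_rfl, (hrej le_rfl).2 (Or.inr h)⟩

section ClosedName

variable {p : Baire} {A : Set ℕ}

lemma exists_excludesBelow_sInf (hpA : repClosedNat p A) :
    ∃ s, ExcludesBelow (initSeg p s) (sInf A) := by
  have hev : ∀ b ∈ Set.Iio (sInf A), ∀ᶠ s in Filter.atTop, b + 1 ∈ initSeg p s := by
    intro b hb
    obtain ⟨j, hj⟩ := not_not.1 fun h => Nat.notMem_of_lt_sInf hb ((hpA b).2 h)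
    exact Filter.eventually_atTop.2 ⟨j + 1, fun s hs => mem_initSeg.2 ⟨j, by omega, hj⟩⟩
  obtain ⟨s, hs⟩ := ((Filter.eventually_all_finite (Set.finite_Iio _)).2 hev).exists
  exact ⟨s, hs⟩

lemma isLeast_of_excludesBelow (hpA : repClosedNat p A) {a s : ℕ} (ha : a ∈ A)
    (hexcl : ExcludesBelow (initSeg p s) a) : IsLeast A a := by
  refine ⟨ha, fun b hb => not_lt.1 fun hba => (hpA b).1 hb ?_⟩
  obtain ⟨j, -, hj⟩ := mem_initSeg.1 (hexcl b hba)
  exact ⟨j, hj⟩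

lemma repClosedNat_minPairName (hpA : repClosedNat p A) (hA : A.Nonempty) :
    ∃ s, repClosedNat (minPairName p) {Nat.pair (sInf A) s} := by
  refine ⟨Nat.find (exists_excludesBelow_sInf hpA), fun n => ?_⟩
  obtain ⟨a, s, rfl⟩ : ∃ a s, n = Nat.pair a s := ⟨_, _, (Nat.pair_unpair n).symm⟩
  rw [exists_minPairName_eq_iff, exists_rejects_initSeg_iff, ← (hpA a).not_left]
  push Not
  rw [Set.mem_singleton_iff, Nat.pair_eq_pair, @eq_comm _ s, Nat.find_eq_iff]
  constructor
  · rintro ⟨rfl, hexcl, hmin⟩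
    exact ⟨Nat.sInf_mem hA, hexcl, hmin⟩
  · rintro ⟨ha, hexcl, hmin⟩
    obtain rfl := (isLeast_of_excludesBelow hpA ha hexcl).csInf_eq.symm
    exact ⟨rfl, hexcl, hmin⟩

end ClosedName

/-- Closed choice on ℕ is Weihrauch equivalent to unique closed choice on ℕ. -/
theorem CN_equivW_UCN : WEquiv repClosedNat repNat repClosedNat repNat CN UCN := by
  constructor
  · refine wRed_of_computableOn_of_primrec (computableOn_minPairName _)
      (Primrec.fst.comp Primrec.unpair) fun p A hpA hA => ?_
    obtain ⟨s, hname⟩ := repClosedNat_minPairName hpA hA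
    refine ⟨_, hname, ⟨Nat.pair (sInf A) s, rfl⟩, fun y hy => ?_⟩
    obtain rfl : y = Nat.pair (sInf A) s := (Set.singleton_eq_singleton_iff.1 hy).symm
    simpa [CN] using Nat.sInf_mem hA
  · refine wRed_of_computableOn_of_primrec (computableOn_id _) Primrec.id fun p A hpA hA => ?_
    obtain ⟨n, rfl : A = {n}⟩ := hA
    refine ⟨{n}, hpA, ⟨n, rfl⟩, fun y hy => ?_⟩
    obtain rfl : y = n := hy
    rfl

end WL
end

section
/- LAY <_W C_N, i.e., C_N × d_MLR is strictly Weihrauch below closed choice on the naturals. -/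
/- Common background: type-two computability on Baire space, represented spaces
(representations as functional relations), Weihrauch reducibility, Cantor space,
Martin-Löf tests, Martin-Löf randomness, and the basic multivalued functions
`C_ℕ`, `d_MLR`, `LAY`, the layer map and layerwise computability. -/

namespace WL

/-! The reduction answers the `C_ℕ`-component with `C_ℕ` itself and the `d_MLR`-component with
the constant `1`. Conversely, a reduction of `C_ℕ` to `LAY` sends computable names to computable
names, and no computable name lies in the domain of `LAY`, since a computable sequence is not
Martin-Löf random. A realizer of `LAY` may answer all of them with one fixed sequence, so the
reduction would choose, continuously in the name, a point of every nonempty closed set with a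
computable name. That is impossible: any finite prefix of the zero name of `ℕ` extends to a
computable name of `ℕ \ {n}`, for every `n`. -/

lemma pairB_two_mul (p q : Baire) (n : ℕ) : pairB p q (2 * n) = p n := by
  simp [pairB]

lemma pairB_two_mul_add_one (p q : Baire) (n : ℕ) : pairB p q (2 * n + 1) = q n := by
  simp [pairB, Nat.add_mod, Nat.add_div]

lemma evens_pairB (p q : Baire) : evens (pairB p q) = p :=
  funext (pairB_two_mul p q)

lemma odds_pairB (p q : Baire) : odds (pairB p q) = q :=
  funext (pairB_two_mul_add_one p q)

lemma initSeg_eq_initSeg_iff {p q : Baire} {M : ℕ} :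
    initSeg p M = initSeg q M ↔ ∀ i < M, p i = q i := by
  simp [initSeg, List.map_inj_left]

lemma initSeg_pairB_left {p q r : Baire} {M : ℕ} (h : initSeg p M = initSeg q M) :
    initSeg (pairB p r) M = initSeg (pairB q r) M := by
  rw [initSeg_eq_initSeg_iff] at h ⊢
  intro i hi
  simp only [pairB]
  split_ifs
  · exact h _ (by omega)
  · rfl

lemma prefixOfFun_range_map (p : Baire) (M : ℕ) : PrefixOfFun ((List.range M).map p) p :=
  fun i => by simp

lemma range_map_prefix {α : Type*} {f g : ℕ → α} {m m' : ℕ} (h : m ≤ m')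
    (hfg : ∀ i < m, f i = g i) : (List.range m).map f <+: (List.range m').map g :=
  List.prefix_iff_getElem.2 ⟨by simpa, fun i hi => by simp at hi; simp [hfg i hi]⟩

lemma computable_range_map {α β : Type*} [Primcodable α] [Primcodable β] {N : α → ℕ}
    {f : α → ℕ → β} (hN : Computable N) (hf : Computable₂ f) :
    Computable fun a => (List.range (N a)).map (f a) := by
  refine (Computable.nat_rec hN (Computable.const []) (h := fun a q => q.2 ++ [f a q.1])
    (Computable.list_concat.comp (Computable.snd.comp Computable.snd)
      (hf.comp Computable.fst (Computable.fst.comp Computable.snd))).to₂).of_eq fun a => ?_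
  induction N a with
  | zero => rfl
  | succ n ih => simp [ih, List.range_succ]

lemma computable_initSeg {p : Baire} (hp : Computable p) : Computable (initSeg p) :=
  computable_range_map Computable.id (hp.comp Computable.snd).to₂

lemma ComputableOn.computable_apply {F : Baire → Baire} {D : Set Baire} (hF : ComputableOn F D)
    {p : Baire} (hp : Computable p) (hpD : p ∈ D) : Computable (F p) := by
  obtain ⟨φ, hφ, -, hφD⟩ := hF
  obtain ⟨hpre, hlong⟩ := hφD p hpD
  have hsearch : Computable₂ fun n m => (φ (initSeg p m))[n]? :=
    Computable.list_getElem?.comp (hφ.comp ((computable_initSeg hp).comp Computable.snd))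
      Computable.fst
  refine (Partrec.rfindOpt hsearch).of_eq_tot fun n => ?_
  obtain ⟨m, hm⟩ := hlong (n + 1)
  have hdom : (Nat.rfindOpt fun m => (φ (initSeg p m))[n]?).Dom :=
    Nat.rfindOpt_dom.2 ⟨m, _, List.getElem?_eq_getElem (by omega)⟩
  obtain ⟨m', hm'⟩ := Nat.rfindOpt_spec (Part.get_mem hdom)
  obtain ⟨h, hget⟩ := List.getElem?_eq_some_iff.1 hm'
  have hval : _ = F p n := hpre m' ⟨n, h⟩
  simp only [List.get_eq_getElem, hget] at hval
  exact hval ▸ Part.get_mem hdom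

lemma ComputableOn.exists_apply_eq_of_initSeg_eq {F : Baire → Baire} {D : Set Baire}
    (hF : ComputableOn F D) {p : Baire} (hp : p ∈ D) (n : ℕ) :
    ∃ M, ∀ q ∈ D, initSeg q M = initSeg p M → F q n = F p n := by
  obtain ⟨φ, -, -, hφD⟩ := hF
  obtain ⟨M, hM⟩ := (hφD p hp).2 (n + 1)
  refine ⟨M, fun q hq hqp => ?_⟩
  have hqn := (hφD q hq).1 M ⟨n, by rw [hqp]; omega⟩
  have hpn := (hφD p hp).1 M ⟨n, by omega⟩
  simp only [List.get_eq_getElem, hqp] at hqn hpn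
  rw [← hqn, ← hpn]

lemma computableOn_lookup {σ : ℕ → ℕ} {g : ℕ → ℕ → ℕ} (hσ : Computable σ) (hg : Computable₂ g)
    {c : ℕ} (hσc : ∀ n, σ n < c * (n + 1)) (D : Set Baire) :
    ComputableOn (fun p n => g n (p (σ n))) D := by
  have hc : 0 < c := by simpa using (hσc 0).trans_le' (Nat.zero_le _)
  have hread : ∀ {L n : ℕ}, n < L / c → σ n < L := fun hn =>
    (hσc _).trans_le (by rw [mul_comm]; exact (Nat.le_div_iff_mul_le hc).1 hn)
  refine ⟨fun l => (List.range (l.length / c)).map fun n => g n (l.getD (σ n) 0), ?_, ?_, ?_⟩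
  · exact computable_range_map
      ((Primrec.nat_div.comp Primrec.list_length (Primrec.const c)).to_comp)
      (hg.comp Computable.snd
        ((Primrec.list_getD 0).to_comp.comp Computable.fst (hσ.comp Computable.snd)))
  · intro l l' hl
    refine range_map_prefix (Nat.div_le_div_right hl.length_le) fun n hn => ?_
    rw [List.getD_eq_getElem _ _ (hread hn),
      List.getD_eq_getElem _ _ ((hread hn).trans_le hl.length_le), hl.getElem]
  · intro p _
    have hseg : ∀ m, (List.range ((initSeg p m).length / c)).map
        (fun n => g n ((initSeg p m).getD (σ n) 0)) =
        (List.range (m / c)).map fun n => g n (p (σ n)) := fun m => by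
      simp only [initSeg, List.length_map, List.length_range]
      refine List.map_congr_left fun n hn => ?_
      rw [List.getD_eq_getElem _ _ (by simpa using hread (List.mem_range.1 hn))]
      simp
    refine ⟨fun m => ?_, fun n => ⟨c * n, by simp [initSeg, Nat.mul_div_cancel_left n hc]⟩⟩
    beta_reduce
    rw [hseg]
    exact prefixOfFun_range_map _ _

lemma prefix_of_cyl_subset_cyl {v w : List Bool} (h : cyl v ⊆ cyl w) : w <+: v := by
  classical
  -- `y` extends `v` and, beyond `v`, disagrees with `w` everywhere
  set y : Cantor := fun j => if hj : j < v.length then v[j] else !(w.getD j false)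
  have hyw : y ∈ cyl w := h fun i => by simp [y]
  have hlen : w.length ≤ v.length := by
    by_contra! hlt
    have := hyw ⟨v.length, hlt⟩
    simp [y, hlt] at this
  refine List.prefix_iff_getElem.2 ⟨hlen, fun i hi => ?_⟩
  have := hyw ⟨i, hi⟩
  simp only [y, dif_pos (hi.trans_le hlen)] at this
  exact this.symm

lemma lebLe_cyl (w : List Bool) : lebLe (cyl w) w.length := by
  intro n
  rcases lt_or_ge n w.length with hlt | hle
  · have : IsEmpty {u : Fin n → Bool // cyl (List.ofFn u) ⊆ cyl w} :=
      ⟨fun u => by simpa using hlt.trans_le (prefix_of_cyl_subset_cyl u.2).length_le⟩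
    simp [cylCount]
  · let tail :
        {u : Fin n → Bool // cyl (List.ofFn u) ⊆ cyl w} → List.Vector Bool (n - w.length) :=
      fun u => ⟨(List.ofFn u.1).drop w.length, by simp⟩
    have htail : Function.Injective tail := by
      intro u v huv
      have hdrop := congrArg Subtype.val huv
      refine Subtype.ext (List.ofFn_injective ?_)
      calc List.ofFn u.1 = w ++ (List.ofFn u.1).drop w.length :=
            (List.prefix_iff_eq_append.1 (prefix_of_cyl_subset_cyl u.2)).symm
        _ = w ++ (List.ofFn v.1).drop w.length := congrArg (w ++ ·) hdrop
        _ = List.ofFn v.1 := List.prefix_iff_eq_append.1 (prefix_of_cyl_subset_cyl v.2)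
    have hcount : cylCount (cyl w) n ≤ 2 ^ (n - w.length) :=
      (Nat.card_le_card_of_injective tail htail).trans_eq (by simp [Nat.card_eq_fintype_card])
    calc 2 ^ w.length * cylCount (cyl w) n ≤ 2 ^ w.length * 2 ^ (n - w.length) := by gcongr
      _ = 2 ^ n := by rw [← pow_add, Nat.add_sub_cancel' hle]

lemma openOf_const_encode_add_one (w : List Bool) :
    openOf (fun _ => Encodable.encode w + 1) = cyl w := by
  simp [openOf, wordOf, Encodable.encodek, Set.iUnion_const]

lemma mem_cyl_initBits (x : Cantor) (n : ℕ) : x ∈ cyl (initBits x n) :=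
  fun i => by rw [List.get_eq_getElem]; simp [initBits]

lemma not_MLRandom_of_computable {x : Cantor} (hx : Computable x) : ¬ MLRandom x := by
  have hbits : Computable (initBits x) :=
    (computable_range_map Computable.id (hx.comp Computable.snd).to₂).of_eq fun n =>
      List.ext_getElem (by simp [initBits]) fun i _ _ => by simp [initBits]
  let T : MLTest :=
    { e := fun i _ => Encodable.encode (initBits x i) + 1
      comp := (Computable.succ.comp (Computable.encode.comp (hbits.comp Computable.fst))).to₂
      meas := fun i => by
        have := lebLe_cyl (initBits x i)
        simpa [openOf_const_encode_add_one, initBits] using this }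
  intro hrand
  obtain ⟨i, hi⟩ := hrand T
  exact hi (by simpa [MLTest.U, T, openOf_const_encode_add_one] using mem_cyl_initBits x i)

lemma computable_of_repCantor {p : Baire} {x : Cantor} (hpx : repCantor p x)
    (hp : Computable p) : Computable x := by
  have hx : x = fun n => decide (p n = 1) := funext fun n => by
    rw [hpx n]; cases x n <;> simp
  exact hx ▸ (PrimrecPred.decide (Primrec.eq.comp Primrec.id (Primrec.const 1))).to_comp.comp hp

lemma notMem_domNames_LAY_of_computable {r : Baire} (hr : Computable r) :
    r ∉ domNames repLAYin LAY := by
  rintro ⟨⟨A, x⟩, ⟨-, hx⟩, ⟨a, b⟩, -, hrand, -⟩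
  have hodds : Computable (odds r) :=
    hr.comp (Primrec.succ.comp (Primrec.nat_mul.comp (Primrec.const 2) Primrec.id)).to_comp
  exact not_MLRandom_of_computable (computable_of_repCantor hx hodds) hrand

section Representations

variable {X Y Z : Type} {δX : Baire → X → Prop} {δZ : Baire → Z → Prop}

lemma rightUnique_prodRep (hX : Relator.RightUnique δX) (hZ : Relator.RightUnique δZ) :
    Relator.RightUnique (prodRep δX δZ) :=
  fun _ _ _ h₁ h₂ => Prod.ext (hX h₁.1 h₂.1) (hZ h₁.2 h₂.2)

lemma rightTotal_prodRep (hX : Relator.RightTotal δX) (hZ : Relator.RightTotal δZ) :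
    Relator.RightTotal (prodRep δX δZ) := fun ⟨x, z⟩ => by
  obtain ⟨p, hp⟩ := hX x
  obtain ⟨q, hq⟩ := hZ z
  exact ⟨pairB p q, by simpa only [prodRep, evens_pairB, odds_pairB] using ⟨hp, hq⟩⟩

lemma rightUnique_repClosedNat : Relator.RightUnique repClosedNat :=
  fun _ _ _ hA hB => Set.ext fun n => (hA n).trans (hB n).symm

lemma rightUnique_repCantor : Relator.RightUnique repCantor := fun p x y hx hy =>
  funext fun n => by
    have := (hx n).symm.trans (hy n)
    revert this
    cases x n <;> cases y n <;> simp

lemma rightTotal_repNat : Relator.RightTotal repNat := fun n => ⟨fun _ => n, rfl⟩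

lemma exists_realizes_eq_of_notMem_domNames {δY : Baire → Y → Prop}
    (hX : Relator.RightUnique δX) (hY : Relator.RightTotal δY) (f : X → Set Y) (d : Baire) :
    ∃ G, Realizes δX δY f G ∧ ∀ p ∉ domNames δX f, G p = d := by
  classical
  refine ⟨fun p => if h : p ∈ domNames δX f then (hY h.choose_spec.2.some).choose else d,
    fun p x hpx hne => ?_, fun p hp => dif_neg hp⟩
  have h : p ∈ domNames δX f := ⟨x, hpx, hne⟩
  refine ⟨h.choose_spec.2.some, ?_, hX h.choose_spec.1 hpx ▸ h.choose_spec.2.some_mem⟩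
  simp only [dif_pos h]
  exact (hY _).choose_spec

end Representations

theorem prodMF_wRed_of_mem_of_nonempty {X Y Z : Type} (δX : Baire → X → Prop)
    (δY : Baire → Y → Prop) (δZ : Baire → Z → Prop) (f : X → Set Y) {d : Z → Set ℕ} (b : ℕ)
    (hb : ∀ z, (d z).Nonempty → b ∈ d z) :
    WRed (prodRep δX δZ) (prodRep δY repNat) δX δY (prodMF f d) f := by
  -- `K r = pairB (odds r) (fun _ => b)`: the oracle's answer paired with the constant `b`
  have hK : ∀ D, ComputableOn (fun r n => if n % 2 = 0 then r (n + 1) else b) D :=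
    computableOn_lookup Computable.succ
      (Primrec.ite (Primrec.eq.comp (Primrec.nat_mod.comp Primrec.fst (Primrec.const 2))
        (Primrec.const 0)) Primrec.snd (Primrec.const b)).to_comp.to₂
      (c := 2) (fun n => by omega)
  refine ⟨evens, _, computableOn_lookup (σ := (2 * ·)) (g := fun _ v => v) (c := 2)
    (Primrec.nat_mul.comp (Primrec.const 2) Primrec.id).to_comp Computable.snd.to₂
    (fun n => by omega) _, fun G hG => ⟨hK _, ?_⟩⟩
  rintro p ⟨x, z⟩ ⟨hx, -⟩ ⟨⟨y, c⟩, hy, hc⟩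
  obtain ⟨y', hy', hy'f⟩ := hG (evens p) x hx ⟨y, hy⟩
  refine ⟨(y', b), ⟨?_, by simp [odds, repNat]⟩, hy'f, hb z ⟨c, hc⟩⟩
  convert hy' using 1
  funext n
  simp [evens, pairB_two_mul_add_one]

def computableDomNames {X Y : Type} (δX : Baire → X → Prop) (f : X → Set Y) : Set Baire :=
  {p ∈ domNames δX f | Computable p}

theorem exists_computable_repClosedNat_apply_not_mem {F : Baire → Baire}
    (hF : ∀ p ∈ computableDomNames repClosedNat CN, ∃ M,
      ∀ q ∈ computableDomNames repClosedNat CN,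
        initSeg q M = initSeg p M → F q 0 = F p 0) :
    ∃ p A, Computable p ∧ repClosedNat p A ∧ A.Nonempty ∧ F p 0 ∉ A := by
  have hzero : repClosedNat (fun _ => 0) Set.univ := by simp [repClosedNat]
  obtain ⟨M, hM⟩ := hF _ ⟨⟨_, hzero, Set.univ_nonempty⟩, Computable.const 0⟩
  set n₀ := F (fun _ => 0) 0
  -- the zero name with `n₀` removed at position `M`
  let p : Baire := fun i => if i = M then n₀ + 1 else 0
  have hp : Computable p := (Primrec.ite (Primrec.eq.comp Primrec.id (Primrec.const M))
    (Primrec.const (n₀ + 1)) (Primrec.const 0)).to_comp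
  have hpA : repClosedNat p {n₀}ᶜ := fun n => by
    simp only [p, Set.mem_compl_iff, Set.mem_singleton_iff]
    constructor
    · rintro hn ⟨i, hi⟩
      split_ifs at hi; omega
    · rintro hn rfl
      exact hn ⟨M, by simp⟩
  have hA : ({n₀}ᶜ : Set ℕ).Nonempty := ⟨n₀ + 1, by simp⟩
  have hseg : initSeg p M = initSeg (fun _ => 0) M :=
    initSeg_eq_initSeg_iff.2 fun i hi => if_neg hi.ne
  exact ⟨p, _, hp, hpA, hA, by rw [hM p ⟨⟨_, hpA, hA⟩, hp⟩ hseg]; simp⟩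

theorem not_CN_wRed_LAY : ¬ WRed repClosedNat repNat repLAYin repPairNat CN LAY := by
  rintro ⟨H, K, hH, hred⟩
  obtain ⟨G, hG, hG_off⟩ := exists_realizes_eq_of_notMem_domNames
    (rightUnique_prodRep rightUnique_repClosedNat rightUnique_repCantor)
    (rightTotal_prodRep rightTotal_repNat rightTotal_repNat) LAY (fun _ => 0)
  obtain ⟨hK, hKG⟩ := hred G hG
  have hGH : ∀ p ∈ computableDomNames repClosedNat CN, G (H p) = fun _ => 0 :=
    fun p hp => hG_off _ (notMem_domNames_LAY_of_computable (hH.computable_apply hp.2 hp.1))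
  have hKdom : ∀ p ∈ computableDomNames repClosedNat CN,
      pairB p (fun _ => 0) ∈ {r | ∃ p ∈ domNames repClosedNat CN, r = pairB p (G (H p))} :=
    fun p hp => ⟨p, hp.1, by rw [hGH p hp]⟩
  obtain ⟨p, A, hp, hpA, hA, hnot⟩ :=
    exists_computable_repClosedNat_apply_not_mem (F := fun p => K (pairB p fun _ => 0))
      fun p hp => by
        obtain ⟨M, hM⟩ := hK.exists_apply_eq_of_initSeg_eq (hKdom p hp) 0
        exact ⟨M, fun q hq hqp => hM _ (hKdom q hq) (initSeg_pairB_left hqp)⟩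
  obtain ⟨n, hn, hnA⟩ := hKG p A hpA hA
  replace hn : K (pairB p (G (H p))) 0 = n := hn
  rw [hGH p ⟨⟨A, hpA, hA⟩, hp⟩] at hn
  exact hnot (hn ▸ hnA)

/-- `LAY <_W C_ℕ`: `C_ℕ × d_MLR` is Weihrauch reducible to closed choice on the
naturals, but not conversely. -/
theorem LAY_lt_CN :
    WRed repLAYin repPairNat repClosedNat repNat LAY CN ∧
    ¬ WRed repClosedNat repNat repLAYin repPairNat CN LAY :=
  ⟨prodMF_wRed_of_mem_of_nonempty _ _ _ CN 1 fun _ ⟨_, hrand, _⟩ => ⟨hrand, rfl⟩, not_CN_wRed_LAY⟩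

end WL
end

section
/- For any p ∈ {0,1}^N with Σ_{n≥1} (−1)^{p(n)}/n convergent, and any target value M ∈ R, there exist finitely many positions j_0 < ... < j_k with p(j_l) = 0 such that the sequence q obtained by setting q(j_l) = 1 and q(m) = p(m) elsewhere satisfies Σ_{n≥1} (−1)^{q(n)}/n ≥ M. -/
/- Common background: type-two computability on Baire space, represented spaces
(representations as functional relations), Weihrauch reducibility, Cantor space,
Martin-Löf tests, Martin-Löf randomness, and the basic multivalued functions
`C_ℕ`, `d_MLR`, `LAY`, the layer map and layerwise computability. -/

namespace WL

/-
Since `∑ 1/n` diverges while `∑ ±1/n` converges, the sum of `1/j` over the zeros `j` of `p`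
diverges: its partial sums are half the difference of the two. Flipping all zeros below `N`
shifts the limit of the signed series by `2 ∑_{j<N, p j = 0} 1/j`, which exceeds any bound for
large `N`.
-/

open Filter Topology Finset

def signedPartialSum (a : ℕ → ℝ) (p : ℕ → Bool) (N : ℕ) : ℝ :=
  ∑ n ∈ range N, (if p n then 1 else -1) * a n

def flipOn (s : Finset ℕ) (p : ℕ → Bool) : ℕ → Bool := fun m => if m ∈ s then true else p m

section

variable {a : ℕ → ℝ} {p : ℕ → Bool}

theorem signedPartialSum_flipOn {s : Finset ℕ} (hs : ∀ j ∈ s, p j = false) {N : ℕ}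
    (hN : s ⊆ range N) :
    signedPartialSum a (flipOn s p) N = signedPartialSum a p N + 2 * ∑ j ∈ s, a j := by
  have hterm : ∀ n, (if flipOn s p n then 1 else -1) * a n =
      (if p n then 1 else -1) * a n + if n ∈ s then 2 * a n else 0 := by
    intro n
    by_cases hn : n ∈ s
    · simp only [flipOn, hn, hs n hn, if_true, Bool.false_eq_true, if_false]
      ring
    · simp only [flipOn, hn, if_false, add_zero]
  simp only [signedPartialSum, hterm, sum_add_distrib, sum_ite_mem, inter_eq_right.mpr hN,
    mul_sum]

theorem tendsto_signedPartialSum_flipOn {s : Finset ℕ} (hs : ∀ j ∈ s, p j = false) {L : ℝ}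
    (hL : Tendsto (signedPartialSum a p) atTop (𝓝 L)) :
    Tendsto (signedPartialSum a (flipOn s p)) atTop (𝓝 (L + 2 * ∑ j ∈ s, a j)) := by
  obtain ⟨N₀, hN₀⟩ := exists_nat_subset_range s
  refine (hL.add_const _).congr' ?_
  filter_upwards [eventually_ge_atTop N₀] with N hN
  exact (signedPartialSum_flipOn hs (hN₀.trans (range_subset_range.mpr hN))).symm

theorem two_mul_sum_filter_eq_false (N : ℕ) :
    2 * ∑ n ∈ (range N).filter (fun n => p n = false), a n =
      ∑ n ∈ range N, a n - signedPartialSum a p N := by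
  rw [sum_filter, mul_sum, signedPartialSum, ← sum_sub_distrib]
  refine sum_congr rfl fun n _ => ?_
  cases p n <;> simp [two_mul]

theorem tendsto_sum_filter_eq_false_atTop (ha₀ : ∀ n, 0 ≤ a n) (ha : ¬Summable a) {L : ℝ}
    (hL : Tendsto (signedPartialSum a p) atTop (𝓝 L)) :
    Tendsto (fun N => ∑ n ∈ (range N).filter (fun n => p n = false), a n) atTop atTop := by
  have hdiv : Tendsto (fun N => ∑ n ∈ range N, a n) atTop atTop :=
    (not_summable_iff_tendsto_nat_atTop_of_nonneg ha₀).mp ha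
  refine ((hdiv.atTop_add hL.neg).atTop_div_const two_pos).congr fun N => ?_
  linarith [two_mul_sum_filter_eq_false (a := a) (p := p) N]

theorem exists_flipOn_tendsto_ge (ha₀ : ∀ n, 0 ≤ a n) (ha : ¬Summable a) {L : ℝ}
    (hL : Tendsto (signedPartialSum a p) atTop (𝓝 L)) (M : ℝ) :
    ∃ s : Finset ℕ, (∀ j ∈ s, p j = false) ∧
      ∃ L', Tendsto (signedPartialSum a (flipOn s p)) atTop (𝓝 L') ∧ M ≤ L' := by
  obtain ⟨N, hN⟩ :=
    ((tendsto_sum_filter_eq_false_atTop ha₀ ha hL).eventually_ge_atTop ((M - L) / 2)).exists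
  refine ⟨(range N).filter (fun n => p n = false), fun j hj => (mem_filter.mp hj).2, _,
    tendsto_signedPartialSum_flipOn (fun j hj => (mem_filter.mp hj).2) hL, ?_⟩
  linarith

end

theorem signedPartialSum_inv_natCast (p : ℕ → Bool) :
    signedPartialSum (fun n => (n : ℝ)⁻¹) p =
      fun N => ∑ n ∈ range N, (if p n then (1 : ℝ) else -1) / (n : ℝ) := by
  funext N
  simp only [signedPartialSum, div_eq_mul_inv]

/-- If `Σ_{n≥1} (-1)^{p(n)}/n` converges (with the convention that flipping a bit of
`p` from `0` to `1` changes the sum by `+2/n`), then for any target `M` one can flip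
finitely many `0`s of `p` to `1`s so that the resulting series converges to a value `≥ M`. -/
theorem harmonic_flip_above (p : ℕ → Bool)
    (hconv : ∃ L : ℝ, Filter.Tendsto
      (fun N => ∑ n ∈ Finset.range N, (if p n then (1 : ℝ) else -1) / (n : ℝ))
      Filter.atTop (nhds L))
    (M : ℝ) :
    ∃ s : Finset ℕ, (∀ j ∈ s, p j = false) ∧
      ∃ q : ℕ → Bool, (∀ m, q m = if m ∈ s then true else p m) ∧
        ∃ L' : ℝ, Filter.Tendsto
          (fun N => ∑ n ∈ Finset.range N, (if q n then (1 : ℝ) else -1) / (n : ℝ))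
          Filter.atTop (nhds L') ∧ M ≤ L' := by
  obtain ⟨L, hL⟩ := hconv
  rw [← signedPartialSum_inv_natCast] at hL
  obtain ⟨s, hs, L', hL', hML'⟩ :=
    exists_flipOn_tendsto_ge (fun n => inv_nonneg.mpr n.cast_nonneg)
      Real.not_summable_natCast_inv hL M
  refine ⟨s, hs, flipOn s p, fun m => rfl, L', ?_, hML'⟩
  rwa [← signedPartialSum_inv_natCast]

end WL
end
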